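/- arXiv:1507.04647 — 5 statements merged into one kernel-verified Lean document; each statement's English description precedes it below -/
import Mathlib

section
/- For every graph G with non-increasing degree sequence d = (d_1, ..., d_n), the domination number of G is at least sl(d), where sl(d) is the smallest k in [n] such that d_1 + ... + d_k ≥ n - k. -/
open Finset

/-- The degree of a vertex in a simple graph. -/
noncomputable def deg {V : Type*} (G : SimpleGraph V) (v : V) : ℕ := Nat.card {u // G.Adj v u}

/-- `D` is a dominating set of `G`. -/
def DomSet {V : Type*} (G : SimpleGraph V) (D : Set V) : Prop := ∀ v ∉ D, ∃ u ∈ D, G.Adj u v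

/-- `S` is an independent set of `G`. -/
def IndepSet {V : Type*} (G : SimpleGraph V) (S : Set V) : Prop :=
  ∀ u ∈ S, ∀ v ∈ S, ¬ G.Adj u v

/-- The domination number of `G`. -/
noncomputable def domNum {V : Type*} [Fintype V] (G : SimpleGraph V) : ℕ :=
  sInf {k | ∃ D : Finset V, D.card = k ∧ DomSet G ↑D}

/-- The independence number of `G`. -/
noncomputable def indepNum {V : Type*} [Fintype V] (G : SimpleGraph V) : ℕ :=
  sSup {k | ∃ S : Finset V, S.card = k ∧ IndepSet G ↑S}

/-- Sum of the first `k` entries `d_1 + ... + d_k` (0-indexed: indices `< k`). -/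
def psum {n : ℕ} (d : Fin n → ℕ) (k : ℕ) : ℕ := ∑ i : Fin n, if (i : ℕ) < k then d i else 0

/-- Sum of the remaining entries `d_{k+1} + ... + d_n` (0-indexed: indices `≥ k`). -/
def ssum {n : ℕ} (d : Fin n → ℕ) (k : ℕ) : ℕ := ∑ i : Fin n, if k ≤ (i : ℕ) then d i else 0

/-- Slater's bound `sl(d) = min{k ∈ [n] : d_1 + ... + d_k ≥ n - k}`. -/
noncomputable def slater (n : ℕ) (d : Fin n → ℕ) : ℕ := sInf {k | 1 ≤ k ∧ k ≤ n ∧ n - k ≤ psum d k}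

/-- The annihilation number `a(d) = n - min{k ∈ [n] : Σ_{i≤k} d_i ≥ Σ_{i>k} d_i}`. -/
noncomputable def annih (n : ℕ) (d : Fin n → ℕ) : ℕ := n - sInf {k | 1 ≤ k ∧ k ≤ n ∧ ssum d k ≤ psum d k}

/-- The number of entries of `d` equal to `j`. -/
def nCount {n : ℕ} (d : Fin n → ℕ) (j : ℕ) : ℕ := (Finset.univ.filter fun i => d i = j).card

/-- The number of entries of `d` that are at least `2`. -/
def nGe2 {n : ℕ} (d : Fin n → ℕ) : ℕ := (Finset.univ.filter fun i => 2 ≤ d i).card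

/-- `F` is a forest realization of the degree sequence `d`. -/
def IsForestReal {n : ℕ} (d : Fin n → ℕ) (F : SimpleGraph (Fin n)) : Prop :=
  F.IsAcyclic ∧ ∀ i, deg F i = d i

/-- The minimum domination number over all forest realizations of `d`. -/
noncomputable def gammaFmin {n : ℕ} (d : Fin n → ℕ) : ℕ :=
  sInf {m | ∃ F : SimpleGraph (Fin n), IsForestReal d F ∧ domNum F = m}

/-- The maximum independence number over all forest realizations of `d`. -/
noncomputable def alphaFmax {n : ℕ} (d : Fin n → ℕ) : ℕ :=
  sSup {m | ∃ F : SimpleGraph (Fin n), IsForestReal d F ∧ indepNum F = m}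

lemma deg_eq_degree {V : Type*} [Fintype V] (G : SimpleGraph V) [DecidableRel G.Adj] (v : V) :
    deg G v = G.degree v := by
  rw [deg, ← SimpleGraph.card_neighborSet_eq_degree, Nat.card_eq_fintype_card]
  rfl

lemma sm_le {k n : ℕ} {f : Fin k → Fin n} (hf : StrictMono f) (j : Fin k) : (j:ℕ) ≤ (f j:ℕ) := by
  induction' h : (j : ℕ) with m ih generalizing j
  · omega
  · have hm : m < k := by omega
    have hvm : ((⟨m, hm⟩ : Fin k) : ℕ) = m := rfl
    have h1 := ih ⟨m, hm⟩ rfl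
    have h2 : (⟨m, hm⟩ : Fin k) < j := by rw [Fin.lt_def]; rw [hvm]; omega
    have := hf h2
    rw [Fin.lt_def] at this
    omega

lemma sum_le_psum {n : ℕ} (d : Fin n → ℕ) (hd : Antitone d) (D : Finset (Fin n)) :
    ∑ i ∈ D, d i ≤ psum d D.card := by
  classical
  set k := D.card with hk
  have h : D.card = k := rfl
  have hkn : k ≤ n := by
    rw [← Fintype.card_fin n, ← Finset.card_univ]
    exact Finset.card_le_card (Finset.subset_univ D)
  have himg : (Finset.univ.image (D.orderEmbOfFin h)) = D := by
    apply Finset.coe_injective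
    rw [Finset.coe_image, Finset.coe_univ, Set.image_univ, Finset.range_orderEmbOfFin]
  have hsum : ∑ i ∈ D, d i = ∑ j : Fin k, d (D.orderEmbOfFin h j) := by
    conv_lhs => rw [← himg]
    rw [Finset.sum_image (fun a _ b _ hab => (D.orderEmbOfFin h).injective hab)]
  rw [hsum]
  have step1 : ∑ j : Fin k, d (D.orderEmbOfFin h j) ≤ ∑ j : Fin k, d (Fin.castLE hkn j) := by
    apply Finset.sum_le_sum
    intro j _
    apply hd
    rw [Fin.le_def]
    exact sm_le (D.orderEmbOfFin h).strictMono j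
  refine step1.trans ?_
  have : ∑ j : Fin k, d (Fin.castLE hkn j) = psum d k := by
    rw [psum, ← Finset.sum_filter]
    rw [show (Finset.univ.filter (fun i : Fin n => (i:ℕ) < k)) = Finset.univ.map (Fin.castLEEmb hkn) by
      ext i
      simp only [Finset.mem_filter, Finset.mem_univ, true_and, Finset.mem_map, Fin.castLEEmb]
      constructor
      · intro hi; exact ⟨⟨i, hi⟩, rfl⟩
      · rintro ⟨j, -, rfl⟩
        exact j.2]
    rw [Finset.sum_map]
    rfl
  exact this.le

theorem stmt1 {n : ℕ} (d : Fin n → ℕ) (hd : Antitone d) (G : SimpleGraph (Fin n))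
    (hdeg : ∀ i, deg G i = d i) : slater n d ≤ domNum G := by
  classical
  rcases Nat.eq_zero_or_pos n with hn | hn
  · subst hn
    have hempty : {k | 1 ≤ k ∧ k ≤ 0 ∧ 0 - k ≤ psum d k} = ∅ := by
      ext k
      simp only [Set.mem_setOf_eq, Set.mem_empty_iff_false, iff_false, not_and]
      omega
    unfold slater
    rw [hempty, Nat.sInf_empty]
    exact Nat.zero_le _
  · have hne : ({k | ∃ D : Finset (Fin n), D.card = k ∧ DomSet G ↑D}).Nonempty :=
      ⟨(univ : Finset (Fin n)).card, univ, rfl,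
        fun v hv => absurd (Finset.mem_coe.mpr (mem_univ v)) hv⟩
    obtain ⟨D, hDcard, hDdom⟩ :
        ∃ D : Finset (Fin n), D.card = domNum G ∧ DomSet G ↑D := Nat.sInf_mem hne
    apply Nat.sInf_le
    rw [← hDcard]
    refine ⟨?_, ?_, ?_⟩
    · rcases D.eq_empty_or_nonempty with rfl | hD
      · exfalso
        obtain ⟨u, hu, -⟩ := hDdom ⟨0, hn⟩ (by simp)
        simp at hu
      · exact Finset.card_pos.mpr hD
    · have := Finset.card_le_card (Finset.subset_univ D)
      simpa using this
    · have hcompl : n - D.card = (univ \ D).card := by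
        rw [Finset.card_sdiff_of_subset (Finset.subset_univ D), Finset.card_univ, Fintype.card_fin]
      rw [hcompl]
      have hsub : univ \ D ⊆ D.biUnion (fun u => G.neighborFinset u) := by
        intro v hv
        rw [Finset.mem_sdiff] at hv
        obtain ⟨u, hu, hadj⟩ := hDdom v (fun hc => hv.2 (Finset.mem_coe.mp hc))
        exact Finset.mem_biUnion.mpr ⟨u, hu, (SimpleGraph.mem_neighborFinset G u v).mpr hadj⟩
      calc (univ \ D).card ≤ (D.biUnion (fun u => G.neighborFinset u)).card :=
            Finset.card_le_card hsub
        _ ≤ ∑ u ∈ D, (G.neighborFinset u).card := Finset.card_biUnion_le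
        _ = ∑ u ∈ D, d u := by
            apply Finset.sum_congr rfl
            intro u _
            rw [← hdeg u, deg_eq_degree]
            rfl
        _ ≤ psum d D.card := sum_le_psum d hd D
end

section
/- Let d = (d_1, ..., d_n) be a non-increasing sequence of positive integers whose sum is even and at most 2n - 2, and let k ∈ [n]. Then there exists a forest F with vertex set {u_1, ..., u_n} such that u_i has degree d_i for all i and {u_{k+1}, ..., u_n} is an independent set, if and only if Σ_{i=1}^k d_i ≥ Σ_{i=k+1}^n d_i. -/
open Finset

/-! Necessity: the degrees of the vertices of an independent set `S` count edges that all end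
outside `S`. Sufficiency, by induction on `∑ d` with zero entries allowed: choose a leaf `x` and a
partner `y`, not both in `S`, such that removing the edge `xy` from the sequence keeps all the
hypotheses; realise the smaller sequence, in which `x` is isolated, and put the edge back, which
cannot close a cycle. -/

open SimpleGraph

lemma deg_eq_ncard {V : Type*} (G : SimpleGraph V) (v : V) : deg G v = (G.neighborSet v).ncard :=
  (Nat.card_coe_set_eq _).symm

lemma deg_eq_card_filter {V : Type*} [Fintype V] (G : SimpleGraph V) [DecidableRel G.Adj] (v : V) :
    deg G v = #{u | G.Adj v u} := by
  rw [deg, Nat.card_eq_fintype_card, Fintype.card_subtype]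

lemma isIsolated_of_deg_eq_zero {V : Type*} [Finite V] {G : SimpleGraph V} {v : V}
    (h : deg G v = 0) : G.IsIsolated v := by
  rwa [deg_eq_ncard, Set.ncard_eq_zero, neighborSet_eq_empty] at h

lemma deg_sup_of_disjoint {V : Type*} [Finite V] {G H : SimpleGraph V} (h : Disjoint G H) (v : V) :
    deg (G ⊔ H) v = deg G v + deg H v := by
  simp only [deg_eq_ncard, neighborSet_sup]
  exact Set.ncard_union_eq (disjoint_neighborSet.mpr h v)

lemma deg_edge {V : Type*} [DecidableEq V] {x y : V} (hxy : x ≠ y) (v : V) :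
    deg (edge x y) v = (Pi.single x 1 : V → ℕ) v + (Pi.single y 1 : V → ℕ) v := by
  rw [deg_eq_ncard]
  by_cases hvx : v = x
  · subst hvx
    have : (edge v y).neighborSet v = {y} := by
      ext u
      simp only [mem_neighborSet, edge_adj, Set.mem_singleton_iff]
      grind
    simp [this, hxy]
  by_cases hvy : v = y
  · subst hvy
    have : (edge x v).neighborSet v = {x} := by
      ext u
      simp only [mem_neighborSet, edge_adj, Set.mem_singleton_iff]
      grind
    simp [this, hvx]
  · have : (edge x y).neighborSet v = ∅ := by ext u; simp [edge_adj, hvx, hvy]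
    simp [this, hvx, hvy]

theorem sum_deg_le_sum_deg_compl {V : Type*} [Fintype V] [DecidableEq V] {G : SimpleGraph V}
    {S : Finset V} (hS : IndepSet G ↑S) :
    ∑ v ∈ S, deg G v ≤ ∑ v ∈ Sᶜ, deg G v := by
  classical
  calc ∑ v ∈ S, deg G v = ∑ v ∈ S, #(Sᶜ.bipartiteAbove G.Adj v) := by
        refine sum_congr rfl fun v hv => ?_
        rw [deg_eq_card_filter, bipartiteAbove]
        congr 1
        ext u
        simp only [mem_filter, mem_univ, true_and, mem_compl, iff_and_self]
        exact fun h hu => hS v hv u hu h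
    _ = ∑ u ∈ Sᶜ, #(S.bipartiteBelow G.Adj u) :=
        sum_card_bipartiteAbove_eq_sum_card_bipartiteBelow _
    _ ≤ ∑ u ∈ Sᶜ, deg G u := sum_le_sum fun u _ => by
        rw [deg_eq_card_filter, bipartiteBelow]
        exact card_le_card fun v => by simp +contextual [G.adj_comm]

lemma SimpleGraph.IsIsolated.not_reachable {V : Type*} {G : SimpleGraph V} {x y : V}
    (hx : G.IsIsolated x) (hxy : x ≠ y) : ¬G.Reachable x y := by
  rintro ⟨p⟩
  cases p with
  | nil => exact hxy rfl
  | cons h _ => exact hx _ h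

lemma IndepSet.sup_edge {V : Type*} {G : SimpleGraph V} {S : Set V} {x y : V}
    (hS : IndepSet G S) (hxy : x ∉ S ∨ y ∉ S) : IndepSet (G ⊔ edge x y) S := by
  rintro u hu v hv (h | h)
  · exact hS u hu v hv h
  · rw [edge_adj] at h
    rcases h with ⟨⟨rfl, rfl⟩ | ⟨rfl, rfl⟩, -⟩ <;> tauto

lemma exists_mem_eq_one {V : Type*} {d : V → ℕ} {s : Finset V} (h1 : ∀ v ∈ s, d v ≤ 1)
    (h : ∑ v ∈ s, d v ≠ 0) : ∃ v ∈ s, d v = 1 := by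
  obtain ⟨v, hv, hne⟩ := exists_ne_zero_of_sum_ne_zero h
  exact ⟨v, hv, by have := h1 v hv; omega⟩

lemma sum_add_single_add_single {V : Type*} [DecidableEq V] (d : V → ℕ) (x y : V)
    (s : Finset V) :
    ∑ v ∈ s, (d + Pi.single x 1 + Pi.single y 1 : V → ℕ) v =
      ∑ v ∈ s, d v + (if x ∈ s then 1 else 0) + (if y ∈ s then 1 else 0) := by
  simp only [Pi.add_apply, sum_add_distrib, sum_pi_single']

section DegreeSequence

variable {V : Type*} [Fintype V]

lemma card_support_add_single_add_single [DecidableEq V] {d : V → ℕ} {x y : V} (hxy : x ≠ y)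
    (hx : d x = 0) (hy : d y ≠ 0) :
    #{v | (d + Pi.single x 1 + Pi.single y 1 : V → ℕ) v ≠ 0} = #{v | d v ≠ 0} + 1 := by
  rw [← card_insert_of_notMem (s := {v | d v ≠ 0}) (by simpa using hx)]
  congr 1
  ext v
  by_cases hvx : v = x <;> by_cases hvy : v = y <;> simp_all

lemma sum_eq_card_support_of_le_one {d : V → ℕ} (h : ∀ v, d v ≤ 1) :
    ∑ v, d v = #{v | d v ≠ 0} := by
  rw [card_eq_sum_ones, sum_filter]
  exact sum_congr rfl fun v _ => by have := h v; split_ifs <;> omega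

lemma exists_eq_one_of_sum_lt {d : V → ℕ} (h : ∑ v, d v < 2 * #{v | d v ≠ 0}) :
    ∃ v, d v = 1 := by
  by_contra! h1
  have : 2 * #{v | d v ≠ 0} ≤ ∑ v, d v :=
    calc 2 * #{v | d v ≠ 0} = ∑ v with d v ≠ 0, 2 := by rw [sum_const, smul_eq_mul, mul_comm]
      _ ≤ ∑ v with d v ≠ 0, d v := sum_le_sum fun v hv => by
          have := h1 v; simp only [mem_filter] at hv; omega
      _ ≤ ∑ v, d v := sum_le_sum_of_subset (subset_univ _)
  omega

end DegreeSequence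

section Construction

variable {V : Type*} [Fintype V] [DecidableEq V] {S : Finset V} {d : V → ℕ} {x y : V}

/-- The hypotheses of the theorem, for a sequence `d` that may vanish (vertices with `d v = 0`
become isolated) and the set `S` that is to be independent. The subtraction in `sum_le` is
truncated, so the zero sequence is admissible. -/
structure Admissible (S : Finset V) (d : V → ℕ) : Prop where
  even : Even (∑ v, d v)
  sum_le : ∑ v, d v ≤ 2 * #{v | d v ≠ 0} - 2
  sum_le_sum_compl : ∑ v ∈ S, d v ≤ ∑ v ∈ Sᶜ, d v

/-- Splitting the edge `xy` at the leaf `x` off an admissible sequence leaves it admissible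
(`IsPrunable.admissible`); `two_le_or_le_one` keeps `y` in the support unless every degree is at
most one. -/
structure IsPrunable (S : Finset V) (d : V → ℕ) (x y : V) : Prop where
  ne : x ≠ y
  leaf : d x = 1
  pos : d y ≠ 0
  two_le_or_le_one : 2 ≤ d y ∨ ∀ v, d v ≤ 1
  not_mem : x ∉ S ∨ y ∉ S
  excess : x ∉ S → y ∉ S → ∑ v ∈ S, d v + 2 ≤ ∑ v ∈ Sᶜ, d v

lemma exists_isPrunable_of_le_one (hall : ∀ v, d v ≤ 1) (hne : ∑ v, d v ≠ 0)
    (h : Admissible S d) : ∃ x y, IsPrunable S d x y := by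
  have htot := sum_add_sum_compl S d
  obtain ⟨r, hr⟩ := h.even
  have hS := h.sum_le_sum_compl
  by_cases hS0 : ∑ v ∈ S, d v = 0
  · obtain ⟨x, hx, hx1⟩ := exists_mem_eq_one (s := Sᶜ) (fun v _ => hall v) (by omega)
    have hrest := add_sum_erase Sᶜ d hx
    obtain ⟨y, hy, hy1⟩ := exists_mem_eq_one (s := Sᶜ.erase x) (fun v _ => hall v) (by omega)
    obtain ⟨hyx, -⟩ := mem_erase.mp hy
    exact ⟨x, y, ⟨hyx.symm, hx1, by omega, Or.inr hall, Or.inl (mem_compl.mp hx),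
      fun _ _ => by omega⟩⟩
  · obtain ⟨x, hx, hx1⟩ := exists_mem_eq_one (fun v _ => hall v) hS0
    obtain ⟨y, hy, hy1⟩ := exists_mem_eq_one (s := Sᶜ) (fun v _ => hall v) (by omega)
    exact ⟨x, y, ⟨ne_of_mem_of_not_mem hx (mem_compl.mp hy), hx1, by omega, Or.inr hall,
      Or.inr (mem_compl.mp hy), fun h => absurd hx h⟩⟩

lemma exists_isPrunable_of_two_le {w : V} (hw : 2 ≤ d w) (h : Admissible S d) :
    ∃ x y, IsPrunable S d x y := by
  have hS := h.sum_le_sum_compl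
  have hsupp : 0 < #{v | d v ≠ 0} := card_pos.mpr ⟨w, by simpa using (by omega : d w ≠ 0)⟩
  obtain ⟨x₀, hx₀⟩ := exists_eq_one_of_sum_lt (d := d) (by have := h.sum_le; omega)
  by_cases hA : ∃ a ∉ S, 2 ≤ d a
  · obtain ⟨a, haS, ha⟩ := hA
    by_cases hBleaf : ∃ b ∈ S, d b = 1
    · obtain ⟨b, hbS, hb⟩ := hBleaf
      exact ⟨b, a, ne_of_mem_of_not_mem hbS haS, hb, by omega, Or.inl ha, Or.inr haS,
        fun h => absurd hbS h⟩
    push Not at hBleaf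
    have hx₀S : x₀ ∉ S := fun h => hBleaf x₀ h hx₀
    by_cases hS0 : ∑ v ∈ S, d v = 0
    · have : d a ≤ ∑ v ∈ Sᶜ, d v := single_le_sum (by simp) (mem_compl.mpr haS)
      exact ⟨x₀, a, fun h => by subst h; omega, hx₀, by omega, Or.inl ha, Or.inl hx₀S,
        fun _ _ => by omega⟩
    · obtain ⟨c, hcS, hc⟩ := exists_ne_zero_of_sum_ne_zero hS0
      have := hBleaf c hcS
      exact ⟨x₀, c, (ne_of_mem_of_not_mem hcS hx₀S).symm, hx₀, hc, Or.inl (by omega),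
        Or.inl hx₀S, fun _ h => absurd hcS h⟩
  · push Not at hA
    have hwS : w ∈ S := by by_contra h; have := hA w h; omega
    have : d w ≤ ∑ v ∈ S, d v := single_le_sum (by simp) hwS
    obtain ⟨a, haS, ha⟩ := exists_mem_eq_one (s := Sᶜ) (d := d)
      (fun v hv => by have := hA v (mem_compl.mp hv); omega) (by omega)
    exact ⟨a, w, (ne_of_mem_of_not_mem hwS (mem_compl.mp haS)).symm, ha, by omega, Or.inl hw,
      Or.inl (mem_compl.mp haS), fun _ h => absurd hwS h⟩

lemma Admissible.exists_isPrunable (h : Admissible S d) (hne : ∑ v, d v ≠ 0) :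
    ∃ x y, IsPrunable S d x y := by
  by_cases hall : ∀ v, d v ≤ 1
  · exact exists_isPrunable_of_le_one hall hne h
  · push Not at hall
    obtain ⟨w, hw⟩ := hall
    exact exists_isPrunable_of_two_le hw h

lemma IsPrunable.exists_eq_add (p : IsPrunable S d x y) :
    ∃ d' : V → ℕ, d = d' + Pi.single x 1 + Pi.single y 1 :=
  ⟨d - Pi.single x 1 - Pi.single y 1, funext fun v => by
    have := p.leaf; have := p.pos; have := p.ne
    by_cases hvx : v = x <;> by_cases hvy : v = y <;> simp_all; omega⟩

lemma IsPrunable.admissible {d' : V → ℕ}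
    (p : IsPrunable S (d' + Pi.single x 1 + Pi.single y 1) x y)
    (h : Admissible S (d' + Pi.single x 1 + Pi.single y 1)) : Admissible S d' := by
  have hsum (s : Finset V) := sum_add_single_add_single d' x y s
  have hx : d' x = 0 := by simpa [p.ne] using p.leaf
  have htot := hsum univ
  simp only [mem_univ, if_true] at htot
  obtain ⟨r, hr⟩ := h.even
  have heven : Even (∑ v, d' v) := ⟨r - 1, by omega⟩
  refine ⟨heven, ?_, ?_⟩
  · have hle := h.sum_le
    rcases p.two_le_or_le_one with hy | hall
    · have hy' : d' y ≠ 0 := by simp [p.ne.symm] at hy; omega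
      rw [card_support_add_single_add_single p.ne hx hy'] at hle
      omega
    · have hall' : ∀ v, d' v ≤ 1 := fun v =>
        le_trans (by simp only [Pi.add_apply, add_assoc, Nat.le_add_right]) (hall v)
      obtain ⟨s, hs⟩ := heven
      rw [sum_eq_card_support_of_le_one hall'] at hs ⊢
      omega
  · have hS := h.sum_le_sum_compl
    have hex := p.excess
    have hnot := p.not_mem
    rw [hsum, hsum] at hS hex
    by_cases hxS : x ∈ S <;> by_cases hyS : y ∈ S <;> simp_all

theorem Admissible.exists_forest (h : Admissible S d) :
    ∃ G : SimpleGraph V, G.IsAcyclic ∧ (∀ v, deg G v = d v) ∧ IndepSet G ↑S := by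
  induction hN : ∑ v, d v using Nat.strong_induction_on generalizing d with
  | _ N ih =>
  by_cases hN0 : N = 0
  · have hd : d = 0 := funext fun v => sum_eq_zero_iff.mp (hN.trans hN0) v (mem_univ v)
    exact ⟨⊥, isAcyclic_bot, fun v => by simp [hd, deg], fun _ _ _ _ h => h⟩
  obtain ⟨x, y, p⟩ := h.exists_isPrunable (by omega)
  obtain ⟨d', rfl⟩ := p.exists_eq_add
  have hx : d' x = 0 := by simpa [p.ne] using p.leaf
  obtain ⟨G, hG, hdeg, hind⟩ := ih (∑ v, d' v)
    (by rw [← hN, sum_add_single_add_single]; simp) (p.admissible h) rfl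
  have hxG : G.IsIsolated x := isIsolated_of_deg_eq_zero ((hdeg x).trans hx)
  refine ⟨G ⊔ edge x y, hG.sup_edge_of_not_reachable (hxG.not_reachable p.ne), fun v => ?_,
    hind.sup_edge p.not_mem⟩
  rw [deg_sup_of_disjoint ((disjoint_edge G).mpr (hxG y)), deg_edge p.ne, hdeg, add_assoc]
  rfl

end Construction

lemma ssum_eq_sum_filter {n : ℕ} (d : Fin n → ℕ) (k : ℕ) :
    ssum d k = ∑ i ∈ ({i | k ≤ (i : ℕ)} : Finset (Fin n)), d i :=
  (sum_filter _ _).symm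

lemma psum_eq_sum_compl_filter {n : ℕ} (d : Fin n → ℕ) (k : ℕ) :
    psum d k = ∑ i ∈ ({i | k ≤ (i : ℕ)} : Finset (Fin n))ᶜ, d i := by
  rw [compl_filter, psum, sum_filter]
  simp only [not_le]

theorem stmt3_general {n : ℕ} (d : Fin n → ℕ) (hpos : ∀ i, 1 ≤ d i)
    (heven : Even (∑ i, d i)) (hsum : ∑ i, d i ≤ 2 * n - 2)
    (k : ℕ) :
    (∃ F : SimpleGraph (Fin n), IsForestReal d F ∧ IndepSet F {i | k ≤ (i : ℕ)}) ↔
      ssum d k ≤ psum d k := by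
  rw [ssum_eq_sum_filter, psum_eq_sum_compl_filter]
  constructor
  · rintro ⟨F, ⟨-, hdeg⟩, hind⟩
    simpa only [hdeg] using sum_deg_le_sum_deg_compl (G := F) (S := {i : Fin n | k ≤ (i : ℕ)})
      (by simpa using hind)
  · intro h
    have hsupp : #{i | d i ≠ 0} = n := by
      rw [filter_true_of_mem fun i _ => by have := hpos i; omega, card_univ, Fintype.card_fin]
    obtain ⟨F, hF, hdeg, hind⟩ := Admissible.exists_forest ⟨heven, by rwa [hsupp], h⟩
    exact ⟨F, ⟨hF, hdeg⟩, by simpa using hind⟩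

theorem stmt3 {n : ℕ} (d : Fin n → ℕ) (hd : Antitone d) (hpos : ∀ i, 1 ≤ d i)
    (heven : Even (∑ i, d i)) (hsum : ∑ i, d i ≤ 2 * n - 2)
    (k : ℕ) (hk1 : 1 ≤ k) (hkn : k ≤ n) :
    (∃ F : SimpleGraph (Fin n), IsForestReal d F ∧ IndepSet F {i | k ≤ (i : ℕ)}) ↔
      ssum d k ≤ psum d k :=
  stmt3_general d hpos heven hsum k
end

section
/- Let d = (d_1, ..., d_n) be a non-increasing sequence of positive integers whose sum is even and at most 2n - 2, with n_1(d) ≥ Σ_{i=1}^{n_{≥2}(d)} d_i. Then sl(d) = n - a(d) = n_{≥2}(d) + (n_1(d) - Σ_{i=1}^{n_{≥2}(d)} d_i)/2. -/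
open Finset

/-! The first `t = n_{≥2}(d)` entries of the non-increasing positive sequence `d` are at least `2`
and all later ones equal `1`. So the partial sums `psum d k` grow by at least `2` per step up to `t`
and by exactly `1` afterwards. For `t ≤ k`, the Slater condition `n - k ≤ psum d k` and the
annihilation condition `ssum d k ≤ psum d k` (where `ssum d k + psum d k = Σ d`) therefore both say
`n_1(d) - psum d t ≤ 2 (k - t)`. For `k < t`, the hypothesis `psum d t ≤ n_1(d)` makes both fail.
The degree sum `psum d t + n_1(d)` is even, so both minima equal `t + (n_1(d) - psum d t) / 2`. -/

theorem Antitone.lt_card_filter_le_iff {β : Type*} [Preorder β] [DecidableLE β] {n : ℕ}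
    {d : Fin n → β} (hd : Antitone d) (c : β) (i : Fin n) : (i : ℕ) < #{j | c ≤ d j} ↔ c ≤ d i := by
  constructor
  · intro hi
    by_contra hci
    have hsub : ({j | c ≤ d j} : Finset (Fin n)) ⊆ Iio i := by
      intro j hj
      rw [mem_filter] at hj
      rw [mem_Iio]
      by_contra hij
      exact hci (hj.2.trans (hd (not_lt.1 hij)))
    have := card_le_card hsub
    rw [Fin.card_Iio] at this
    omega
  · intro hci
    have hsub : Iic i ⊆ ({j | c ≤ d j} : Finset (Fin n)) := fun j hj =>
      mem_filter.2 ⟨mem_univ j, hci.trans (hd (mem_Iic.1 hj))⟩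
    have := card_le_card hsub
    rw [Fin.card_Iic] at this
    omega

theorem sInf_eq_of_forall_iff_le {Q : ℕ → Prop} {m n : ℕ} (h1m : 1 ≤ m) (hmn : m ≤ n)
    (hQ : ∀ k ≤ n, (Q k ↔ m ≤ k)) : sInf {k | 1 ≤ k ∧ k ≤ n ∧ Q k} = m :=
  IsLeast.csInf_eq ⟨⟨h1m, hmn, (hQ m hmn).2 le_rfl⟩, fun _ ⟨_, hkn, hk⟩ => (hQ _ hkn).1 hk⟩

section PartialSums

variable {n : ℕ} {d : Fin n → ℕ}

theorem psum_zero : psum d 0 = 0 := by simp [psum]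

theorem psum_of_le {k : ℕ} (hnk : n ≤ k) : psum d k = ∑ i, d i :=
  sum_congr rfl fun i _ => if_pos (i.isLt.trans_le hnk)

theorem ssum_add_psum (k : ℕ) : ssum d k + psum d k = ∑ i, d i := by
  rw [ssum, psum, ← sum_add_distrib]
  refine sum_congr rfl fun i _ => ?_
  split_ifs <;> omega

theorem psum_succ {k : ℕ} (hk : k < n) : psum d (k + 1) = psum d k + d ⟨k, hk⟩ := by
  have hsplit : ∀ i : Fin n, (if (i : ℕ) < k + 1 then d i else 0) =
      (if (i : ℕ) < k then d i else 0) + if ⟨k, hk⟩ = i then d i else 0 := by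
    intro i
    simp only [Fin.ext_iff]
    split_ifs <;> omega
  rw [psum, sum_congr rfl fun i _ => hsplit i, sum_add_distrib, sum_ite_eq, if_pos (mem_univ _),
    psum]

theorem psum_add_mul_le_psum {c m k : ℕ} (hmk : m ≤ k) (hkn : k ≤ n)
    (hc : ∀ i : Fin n, m ≤ i → (i : ℕ) < k → c ≤ d i) : psum d m + c * (k - m) ≤ psum d k := by
  induction k, hmk using Nat.le_induction with
  | base => simp
  | succ k hmk ih =>
    have hstep := hc ⟨k, hkn⟩ hmk (Nat.lt_succ_self k)
    rw [psum_succ hkn, Nat.sub_add_comm hmk, mul_add_one]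
    have := ih (by omega) fun i him hik => hc i him (by omega)
    omega

theorem psum_eq_psum_add_mul {c m k : ℕ} (hmk : m ≤ k) (hkn : k ≤ n)
    (hc : ∀ i : Fin n, m ≤ i → (i : ℕ) < k → d i = c) : psum d k = psum d m + c * (k - m) := by
  induction k, hmk using Nat.le_induction with
  | base => simp
  | succ k hmk ih =>
    rw [psum_succ hkn, hc ⟨k, hkn⟩ hmk (Nat.lt_succ_self k), Nat.sub_add_comm hmk, mul_add_one,
      ih (by omega) fun i him hik => hc i him (by omega)]
    ring

end PartialSums

section DegreeSequence

variable {n : ℕ} {d : Fin n → ℕ}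

theorem nGe2_le : nGe2 d ≤ n := by
  simpa [nGe2] using card_filter_le (univ : Finset (Fin n)) fun i => 2 ≤ d i

theorem lt_nGe2_iff (hd : Antitone d) (i : Fin n) : (i : ℕ) < nGe2 d ↔ 2 ≤ d i :=
  hd.lt_card_filter_le_iff 2 i

theorem nCount_one_eq (hpos : ∀ i, 1 ≤ d i) : nCount d 1 = n - nGe2 d := by
  have hone : filter (fun i => d i = 1) univ = filter (fun i => ¬ 2 ≤ d i) univ :=
    filter_congr fun i _ => by have := hpos i; omega
  have := card_filter_add_card_filter_not (s := univ) fun i : Fin n => 2 ≤ d i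
  rw [card_univ, Fintype.card_fin] at this
  rw [nCount, hone, nGe2]
  omega

theorem psum_eq_psum_nGe2_add (hd : Antitone d) (hpos : ∀ i, 1 ≤ d i) {k : ℕ}
    (htk : nGe2 d ≤ k) (hkn : k ≤ n) : psum d k = psum d (nGe2 d) + (k - nGe2 d) := by
  rw [psum_eq_psum_add_mul htk hkn (c := 1) fun i hti _ => ?_, one_mul]
  have := (lt_nGe2_iff hd i).not.1 (by omega)
  have := hpos i
  omega

theorem psum_add_two_mul_le (hd : Antitone d) {m : ℕ} (hmt : m ≤ nGe2 d) :
    psum d m + 2 * (nGe2 d - m) ≤ psum d (nGe2 d) :=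
  psum_add_mul_le_psum hmt nGe2_le fun i _ hit => (lt_nGe2_iff hd i).1 hit

theorem sum_eq_psum_nGe2_add_nCount (hd : Antitone d) (hpos : ∀ i, 1 ≤ d i) :
    ∑ i, d i = psum d (nGe2 d) + nCount d 1 := by
  rw [← psum_of_le le_rfl, psum_eq_psum_nGe2_add hd hpos nGe2_le le_rfl, nCount_one_eq hpos]

variable (hd : Antitone d) (hpos : ∀ i, 1 ≤ d i) (heven : Even (∑ i, d i))
  (h1 : psum d (nGe2 d) ≤ nCount d 1)
include hd hpos heven h1

theorem slater_condition_iff {k : ℕ} (hkn : k ≤ n) :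
    n - k ≤ psum d k ↔ nGe2 d + (nCount d 1 - psum d (nGe2 d)) / 2 ≤ k := by
  obtain ⟨s, hs⟩ := heven
  rw [sum_eq_psum_nGe2_add_nCount hd hpos] at hs
  have hn1 := nCount_one_eq hpos
  rcases le_or_gt (nGe2 d) k with htk | hkt
  · rw [psum_eq_psum_nGe2_add hd hpos htk hkn]
    omega
  · have := psum_add_two_mul_le hd hkt.le
    omega

theorem annih_condition_iff {k : ℕ} (hkn : k ≤ n) :
    ssum d k ≤ psum d k ↔ nGe2 d + (nCount d 1 - psum d (nGe2 d)) / 2 ≤ k := by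
  obtain ⟨s, hs⟩ := heven
  have htotal := ssum_add_psum (d := d) k
  rw [sum_eq_psum_nGe2_add_nCount hd hpos] at hs htotal
  rcases le_or_gt (nGe2 d) k with htk | hkt
  · rw [psum_eq_psum_nGe2_add hd hpos htk hkn] at htotal ⊢
    omega
  · have := psum_add_two_mul_le hd hkt.le
    omega

end DegreeSequence

theorem stmt6_general {n : ℕ} (d : Fin n → ℕ) (hd : Antitone d) (hpos : ∀ i, 1 ≤ d i)
    (heven : Even (∑ i, d i))
    (h1 : psum d (nGe2 d) ≤ nCount d 1) :
    slater n d = n - annih n d ∧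
      slater n d = nGe2 d + (nCount d 1 - psum d (nGe2 d)) / 2 := by
  rcases Nat.eq_zero_or_pos n with rfl | hn
  · simp [slater, annih, nGe2, nCount, Nat.one_le_iff_ne_zero]
  set m := nGe2 d + (nCount d 1 - psum d (nGe2 d)) / 2
  have hslater : ∀ k ≤ n, (n - k ≤ psum d k ↔ m ≤ k) := fun _ =>
    slater_condition_iff hd hpos heven h1
  have h1m : 1 ≤ m := by
    have := hslater 0 (Nat.zero_le n)
    rw [psum_zero] at this
    omega
  have hmn : m ≤ n := (hslater n le_rfl).1 (by omega)
  have hsl : slater n d = m := sInf_eq_of_forall_iff_le h1m hmn hslater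
  have han : annih n d = n - m := by
    rw [annih, sInf_eq_of_forall_iff_le h1m hmn fun _ => annih_condition_iff hd hpos heven h1]
  exact ⟨by omega, hsl⟩

theorem stmt6 {n : ℕ} (d : Fin n → ℕ) (hd : Antitone d) (hpos : ∀ i, 1 ≤ d i)
    (heven : Even (∑ i, d i)) (hsum : ∑ i, d i ≤ 2 * n - 2)
    (h1 : psum d (nGe2 d) ≤ nCount d 1) :
    slater n d = n - annih n d ∧
      slater n d = nGe2 d + (nCount d 1 - psum d (nGe2 d)) / 2 :=
  stmt6_general d hd hpos heven h1
end

section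
/- If T is a tree on n ≥ 3 vertices with non-increasing degree sequence d, then γ(T) ≤ 3·sl(d) - 2. -/
open Finset

lemma walk_stay {V : Type*} {G : SimpleGraph V} (S : Set V)
    (hS : ∀ x ∈ S, ∀ y, G.Adj x y → y ∈ S) :
    ∀ {a b : V}, G.Walk a b → a ∈ S → b ∈ S := by
  intro a b w
  induction w with
  | nil => exact id
  | cons h p ih => intro ha; exact ih (hS _ ha _ h)

theorem stmt8 {n : ℕ} (hn : 3 ≤ n) (d : Fin n → ℕ) (hd : Antitone d)
    (T : SimpleGraph (Fin n)) (hconn : T.Connected) (hacyc : T.IsAcyclic)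
    (hdeg : ∀ i, deg T i = d i) :
    domNum T ≤ 3 * slater n d - 2 := by
  classical
  -- basic facts
  have hdeg' : ∀ i, T.degree i = d i := fun i => by rw [← deg_eq_degree, hdeg]
  have hsum : ∑ i, d i = 2 * (n - 1) := by
    have h1 := SimpleGraph.sum_degrees_eq_twice_card_edges T
    have h2 : T.edgeFinset.card = n - 1 := by
      have h3 := SimpleGraph.IsTree.card_edgeFinset ⟨hconn, hacyc⟩
      simp only [Fintype.card_fin] at h3
      omega
    calc ∑ i, d i = ∑ i, T.degree i := by simp [hdeg']
      _ = 2 * T.edgeFinset.card := h1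
      _ = 2 * (n - 1) := by rw [h2]
  have hd1 : ∀ i, 1 ≤ d i := by
    intro i
    rw [← hdeg i]
    have hnj : ∃ j : Fin n, j ≠ i := by
      apply Fintype.exists_ne_of_one_lt_card
      simp; omega
    obtain ⟨j, hj⟩ := hnj
    obtain ⟨w⟩ := hconn.preconnected i j
    have hne : Nonempty {u // T.Adj i u} := by
      cases w with
      | nil => exact (hj rfl).elim
      | cons h p => exact ⟨⟨_, h⟩⟩
    have : 0 < Nat.card {u // T.Adj i u} := Nat.card_pos
    rw [deg]; omega
  have leafnb : ∀ v : Fin n, d v = 1 → ∀ u y, T.Adj v u → T.Adj v y → y = u := by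
    intro v hv u y hu hy
    have h1 : Nat.card {u // T.Adj v u} = 1 := by rw [← deg, hdeg, hv]
    rw [Nat.card_eq_one_iff_unique] at h1
    have := h1.1
    have := Subsingleton.elim (⟨y, hy⟩ : {u // T.Adj v u}) ⟨u, hu⟩
    exact congrArg Subtype.val this
  -- the dominating set of internal vertices
  set D : Finset (Fin n) := univ.filter (fun i => 2 ≤ d i) with hD
  have hdom : DomSet T ↑D := by
    intro v hv
    have hv1 : d v = 1 := by
      have h2 : ¬ 2 ≤ d v := by simpa [hD] using hv
      have := hd1 v; omega
    have hcard1 : Nat.card {u // T.Adj v u} = 1 := by rw [← deg, hdeg, hv1]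
    obtain ⟨⟨u, hu⟩, -⟩ := Nat.card_eq_one_iff_exists.mp hcard1
    have hu2 : 2 ≤ d u := by
      by_contra h
      have hu1 : d u = 1 := by have := hd1 u; omega
      set S : Set (Fin n) := {v, u} with hS
      have hclosed : ∀ x ∈ S, ∀ y, T.Adj x y → y ∈ S := by
        intro x hx y hxy
        rcases hx with rfl | hx
        · have hyu : y = u := leafnb x hv1 u y hu hxy
          rw [hyu]; exact Set.mem_insert_of_mem _ rfl
        · rw [Set.mem_singleton_iff] at hx; subst hx
          have hyv : y = v := leafnb x hu1 v y hu.symm hxy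
          rw [hyv]; exact Set.mem_insert _ _
      obtain ⟨w, hwv, hwu⟩ : ∃ w : Fin n, w ≠ v ∧ w ≠ u := by
        by_contra hco
        push_neg at hco
        have hsub2 : (univ : Finset (Fin n)) ⊆ {v, u} := by
          intro x _
          simp only [Finset.mem_insert, Finset.mem_singleton]
          by_cases hx : x = v
          · exact Or.inl hx
          · exact Or.inr (hco x hx)
        have h5 : ({v, u} : Finset (Fin n)).card ≤ 2 := by
          apply le_trans (Finset.card_insert_le _ _); simp
        have h6 := Finset.card_le_card hsub2
        simp only [Finset.card_univ, Fintype.card_fin] at h6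
        omega
      obtain ⟨wk⟩ := hconn.preconnected v w
      have hwS : w ∈ S := walk_stay S hclosed wk (Set.mem_insert _ _)
      rcases hwS with h7 | h7
      · exact hwv h7
      · exact hwu (Set.mem_singleton_iff.mp h7)
    refine ⟨u, ?_, hu.symm⟩
    simp [hD, hu2]
  -- Slater's number
  have hkmem : slater n d ∈ {k | 1 ≤ k ∧ k ≤ n ∧ n - k ≤ psum d k} := by
    apply Nat.sInf_mem
    exact ⟨n, by omega, le_refl n, by simp⟩
  set k := slater n d with hk
  obtain ⟨hk1, hkn, hks⟩ := hkmem
  have hsplit : psum d k + ssum d k = ∑ i, d i := by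
    rw [psum, ssum, ← Finset.sum_add_distrib]
    apply Finset.sum_congr rfl
    intro i _
    have := i.isLt
    split_ifs with h1 h2 <;> omega
  set B : Finset (Fin n) := univ.filter (fun i => k ≤ (i : ℕ) ∧ 2 ≤ d i) with hB
  set R : Finset (Fin n) := univ.filter (fun i => k ≤ (i : ℕ)) with hR
  have cardlt : (univ.filter (fun i : Fin n => (i : ℕ) < k)).card ≤ k := by
    rw [Finset.card_filter]
    rw [Fin.sum_univ_eq_sum_range (fun i => if i < k then 1 else 0)]
    rw [← Finset.card_filter]
    calc ((range n).filter (· < k)).card ≤ (range k).card :=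
          Finset.card_le_card (by intro x hx; simp at hx ⊢; exact hx.2)
      _ = k := Finset.card_range k
  have cardR : R.card = n - k := by
    rw [hR, Finset.card_filter]
    rw [Fin.sum_univ_eq_sum_range (fun i => if k ≤ i then 1 else 0)]
    rw [← Finset.card_filter]
    have he : (range n).filter (fun i => k ≤ i) = Finset.Ico k n := by
      ext x; simp [Finset.mem_Ico]; tauto
    rw [he, Nat.card_Ico]
  have hss : (n - k) + B.card ≤ ssum d k := by
    have h1 : ssum d k = ∑ i ∈ R, d i := by
      rw [ssum, hR, Finset.sum_filter]
    have h2 : ∑ i ∈ R, (1 + if 2 ≤ d i then 1 else 0) ≤ ∑ i ∈ R, d i := by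
      apply Finset.sum_le_sum
      intro i _
      have := hd1 i
      split_ifs <;> omega
    have h3 : ∑ i ∈ R, (1 + if 2 ≤ d i then 1 else 0)
        = R.card + (R.filter (fun i => 2 ≤ d i)).card := by
      rw [Finset.sum_add_distrib, ← Finset.card_filter]
      simp
    have h4 : R.filter (fun i => 2 ≤ d i) = B := by
      rw [hR, hB, Finset.filter_filter]
    rw [h1, ← cardR, ← h4]
    omega
  have hDsplit : D.card ≤ (univ.filter (fun i : Fin n => (i : ℕ) < k)).card + B.card := by
    have hsub : D ⊆ (univ.filter (fun i : Fin n => (i : ℕ) < k)) ∪ B := by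
      intro x hx
      simp only [hD, hB, Finset.mem_filter, Finset.mem_union, Finset.mem_univ, true_and] at hx ⊢
      by_cases h : (x : ℕ) < k
      · exact Or.inl h
      · exact Or.inr ⟨by omega, hx⟩
    exact le_trans (Finset.card_le_card hsub) (Finset.card_union_le _ _)
  have hdn : domNum T ≤ D.card := Nat.sInf_le ⟨D, rfl, hdom⟩
  omega
end

section
/- Let d = (d_1, ..., d_n) be a non-increasing sequence of positive integers with even sum at most 2n - 2, and let k ∈ [n]. If Σ_{i=1}^k d_i ≥ n - k and 0 ≤ Σ_{i=k+1}^n d_i - Σ_{i=1}^k d_i ≤ max{0, 2(n_{≥2}(d) - k) - 2}, then there exists a forest F with vertex set {u_1, ..., u_n} and d_F(u_i) = d_i for all i such that {u_1, ..., u_k} is an independent dominating set of F. -/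
open Finset

/-!
The forest is built by induction, peeling off one leaf or one isolated edge at a time. Besides the
future independent dominating set `A`, the state records the vertices `N` outside `A` that still
need a neighbour in `A` and the vertices `D` outside `A` that no longer do. A leaf of `N` is hung on
a vertex of `A` of degree at least two, or paired with a leaf of `A`; failing that, a leaf of `D` is
hung on a vertex outside `A`, or paired with another leaf of `D`; failing that, some leaf of `A`
exists and is hung on a vertex outside `A`, which moves to `D`. The difference
`∑_{i>k} d_i - ∑_{i≤k} d_i` is twice the number of edges avoiding `A`, and the hypothesis bounding
it in terms of the non-leaves outside `A` is what keeps these choices available.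
-/

open Function SimpleGraph

variable {α : Type*}

namespace SimpleGraph

variable {G : SimpleGraph α} {v w : α}

theorem not_reachable_of_isolated (hv : ∀ y, ¬ G.Adj v y) (hvw : v ≠ w) :
    ¬ G.Reachable v w := by
  rintro ⟨p⟩
  cases p with
  | nil => exact hvw rfl
  | cons h _ => exact hv _ h

theorem deg_eq_ncard (G : SimpleGraph α) (x : α) : deg G x = (G.neighborSet x).ncard :=
  Nat.card_coe_set_eq _

theorem deg_eq_zero_of_isolated (hv : ∀ y, ¬ G.Adj v y) : deg G v = 0 := by
  rw [deg_eq_ncard, show G.neighborSet v = ∅ by ext; simp [hv], Set.ncard_empty]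

theorem deg_sup_edge [Finite α] [DecidableEq α] (hv : ∀ y, ¬ G.Adj v y) (hvw : v ≠ w)
    (x : α) :
    deg (G ⊔ edge v w) x = deg G x + if x = v ∨ x = w then 1 else 0 := by
  simp only [deg_eq_ncard, neighborSet_sup]
  by_cases hxv : x = v
  · subst hxv
    have h₂ : (edge x w).neighborSet x = {w} := by ext y; simp [edge_adj]; grind
    rw [show G.neighborSet x = ∅ by ext; simp [hv], h₂]
    simp
  by_cases hxw : x = w
  · subst hxw
    have h₂ : (edge v x).neighborSet x = {v} := by ext y; simp [edge_adj]; grind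
    rw [h₂, Set.union_singleton, Set.ncard_insert_of_notMem (fun h => hv x h.symm)]
    simp
  · have h₂ : (edge v w).neighborSet x = ∅ := by ext y; simp [edge_adj, hxv, hxw]
    simp [h₂, hxv, hxw]

theorem sup_edge_adj (hvw : v ≠ w) : (G ⊔ edge v w).Adj w v :=
  Or.inr ((edge_adj v w w v).2 ⟨Or.inr ⟨rfl, rfl⟩, hvw.symm⟩)

end SimpleGraph

section Counting

variable {S : Finset α} {d : α → ℕ}

theorem card_add_card_filter_le_sum (h : ∀ x ∈ S, 1 ≤ d x) :
    #S + #{x ∈ S | 2 ≤ d x} ≤ ∑ x ∈ S, d x := by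
  rw [card_filter, card_eq_sum_ones, ← sum_add_distrib]
  exact sum_le_sum fun x hx => by have := h x hx; split_ifs <;> omega

variable [DecidableEq α] {w : α}

theorem sum_update_pred_add_one (hw : w ∈ S) (hdw : 1 ≤ d w) :
    ∑ x ∈ S, update d w (d w - 1) x + 1 = ∑ x ∈ S, d x := by
  rw [sum_update_of_mem hw, ← add_sum_erase S d hw, sdiff_singleton_eq_erase]
  omega

theorem one_le_update_pred {V V' : Finset α} (h : ∀ x ∈ V, 1 ≤ d x) (hV : V' ⊆ V)
    (hdw : 2 ≤ d w) : ∀ x ∈ V', 1 ≤ update d w (d w - 1) x := by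
  intro x hx
  rcases eq_or_ne x w with rfl | hxw
  · simp; omega
  · rw [update_of_ne hxw]; exact h x (hV hx)

end Counting

structure IsIndepDomForest (G : SimpleGraph α) (V A T : Finset α) (d : α → ℕ) : Prop where
  isAcyclic : G.IsAcyclic
  mem_of_adj : ∀ ⦃x y⦄, G.Adj x y → x ∈ V
  deg_eq : ∀ x ∈ V, deg G x = d x
  indep : ∀ a ∈ A, ∀ b ∈ A, ¬ G.Adj a b
  dom : ∀ x ∈ T, ∃ a ∈ A, G.Adj a x

namespace IsIndepDomForest

variable {G : SimpleGraph α} {V A T : Finset α} {d : α → ℕ} {v w : α}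

theorem bot (A : Finset α) (d : α → ℕ) : IsIndepDomForest ⊥ ∅ A ∅ d :=
  ⟨isAcyclic_bot, by simp, by simp, by simp, by simp⟩

theorem isolated (h : IsIndepDomForest G V A T d) {x : α} (hx : x ∉ V) (y : α) : ¬ G.Adj x y :=
  fun hxy => hx (h.mem_of_adj hxy)

theorem mono {T' : Finset α} (h : IsIndepDomForest G V A T d) (hT : T' ⊆ T) :
    IsIndepDomForest G V A T' d :=
  ⟨h.isAcyclic, h.mem_of_adj, h.deg_eq, h.indep, fun x hx => h.dom x (hT hx)⟩

variable [DecidableEq α]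

theorem insert_indep (h : IsIndepDomForest G V A T d) {x : α} (hx : x ∉ V) :
    IsIndepDomForest G V (insert x A) T d := by
  refine ⟨h.isAcyclic, h.mem_of_adj, h.deg_eq, ?_, fun y hy => ?_⟩
  · simp only [mem_insert]
    rintro a (rfl | ha) b (rfl | hb) hab
    · exact h.isolated hx _ hab
    · exact h.isolated hx _ hab
    · exact h.isolated hx _ hab.symm
    · exact h.indep a ha b hb hab
  · obtain ⟨a, ha, hay⟩ := h.dom y hy
    exact ⟨a, mem_insert_of_mem ha, hay⟩

theorem insert_dom (h : IsIndepDomForest G V A T d) {a x : α} (ha : a ∈ A) (hax : G.Adj a x) :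
    IsIndepDomForest G V A (insert x T) d := by
  refine ⟨h.isAcyclic, h.mem_of_adj, h.deg_eq, h.indep, ?_⟩
  simp only [mem_insert, forall_eq_or_imp]
  exact ⟨⟨a, ha, hax⟩, h.dom⟩

theorem insert_isolated (h : IsIndepDomForest G V A T d) {x : α} (hx : x ∉ V) :
    IsIndepDomForest G (insert x V) A T (update d x 0) := by
  refine ⟨h.isAcyclic, fun y z hyz => mem_insert_of_mem (h.mem_of_adj hyz), ?_, h.indep,
    h.dom⟩
  simp only [mem_insert, forall_eq_or_imp, update_self]
  refine ⟨?_, fun y hy => ?_⟩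
  · exact deg_eq_zero_of_isolated (h.isolated hx)
  · rw [update_of_ne (by rintro rfl; exact hx hy)]
    exact h.deg_eq y hy

variable [Fintype α]

theorem sup_edge (h : IsIndepDomForest G V A T (update d w (d w - 1))) (hv : v ∉ V) (hw : w ∈ V)
    (hdv : d v = 1) (hdw : 1 ≤ d w) (hA : v ∉ A ∨ w ∉ A) :
    IsIndepDomForest (G ⊔ edge v w) (insert v V) A T d := by
  have hvw : v ≠ w := by rintro rfl; exact hv hw
  refine ⟨h.isAcyclic.sup_edge_of_not_reachable (not_reachable_of_isolated (h.isolated hv) hvw),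
    ?_, ?_, ?_, ?_⟩
  · intro x y hxy
    rcases hxy with hxy | hxy
    · exact mem_insert_of_mem (h.mem_of_adj hxy)
    · rw [edge_adj] at hxy
      rcases hxy.1 with ⟨rfl, -⟩ | ⟨rfl, -⟩
      · exact mem_insert_self _ _
      · exact mem_insert_of_mem hw
  · intro x hx
    rw [deg_sup_edge (h.isolated hv) hvw]
    rcases mem_insert.1 hx with rfl | hx
    · simp [deg_eq_zero_of_isolated (h.isolated hv), hdv]
    · rw [h.deg_eq x hx]
      by_cases hxw : x = w
      · subst hxw; simp; omega
      · simp [hxw, (show x ≠ v by rintro rfl; exact hv ‹x ∈ V›)]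
  · intro a ha b hb hab
    rcases hab with hab | hab
    · exact h.indep a ha b hb hab
    · rw [edge_adj] at hab
      rcases hab.1 with ⟨rfl, rfl⟩ | ⟨rfl, rfl⟩ <;> tauto
  · intro x hx
    obtain ⟨a, ha, hax⟩ := h.dom x hx
    exact ⟨a, ha, Or.inl hax⟩

theorem sup_edge_of_notMem (h : IsIndepDomForest G V A T d) (hv : v ∉ V) (hw : w ∉ V)
    (hvw : v ≠ w) (hdv : d v = 1) (hdw : d w = 1) (hA : v ∉ A ∨ w ∉ A) :
    IsIndepDomForest (G ⊔ edge v w) (insert v (insert w V)) A T d := by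
  have h' : IsIndepDomForest G (insert w V) A T (update d w (d w - 1)) := by
    simpa [hdw] using h.insert_isolated hw
  exact h'.sup_edge (by simp [hv, hvw]) (mem_insert_self w V) hdv (by omega) hA

end IsIndepDomForest

variable [DecidableEq α]

/-- `#D + #{x ∈ N | 2 ≤ d x}` plays the role of `n_{≥2}(d) - k`; the `forest` and `even` fields say
that `d` is the degree sequence of some forest on `A ∪ N ∪ D`. -/
structure Feasible (A N D : Finset α) (d : α → ℕ) : Prop where
  disjoint_AN : Disjoint A N
  disjoint_AD : Disjoint A D
  disjoint_ND : Disjoint N D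
  one_le : ∀ x ∈ A ∪ N ∪ D, 1 ≤ d x
  card_le : #N ≤ ∑ x ∈ A, d x
  sum_le : ∑ x ∈ A, d x ≤ ∑ x ∈ N, d x + ∑ x ∈ D, d x
  surplus : ∑ x ∈ N, d x + ∑ x ∈ D, d x = ∑ x ∈ A, d x ∨
    ∑ x ∈ N, d x + ∑ x ∈ D, d x + 2 ≤ ∑ x ∈ A, d x + 2 * (#D + #{x ∈ N | 2 ≤ d x})
  forest : #A + #N + #D = 0 ∨
    ∑ x ∈ A, d x + ∑ x ∈ N, d x + ∑ x ∈ D, d x + 2 ≤ 2 * (#A + #N + #D)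
  even : (∑ x ∈ A, d x + ∑ x ∈ N, d x + ∑ x ∈ D, d x) % 2 = 0

namespace Feasible

variable {A N D : Finset α} {d : α → ℕ}

theorem erase_attach_dominated (hf : Feasible A N D d) {a b : α} (hb : b ∈ N) (hdb : d b = 1)
    (ha : a ∈ A) (hda : 2 ≤ d a) : Feasible A (N.erase b) D (update d a (d a - 1)) := by
  obtain ⟨hAN, hAD, hND, hpos, hcard, hle, hsur, hfor, hev⟩ := hf
  have haN : a ∉ N := disjoint_left.1 hAN ha
  have haD : a ∉ D := disjoint_left.1 hAD ha
  have hA := sum_update_pred_add_one ha (d := d) (by omega)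
  have hN : ∑ x ∈ N.erase b, update d a (d a - 1) x + d b = ∑ x ∈ N, d x := by
    rw [sum_update_of_notMem (fun h => haN (mem_of_mem_erase h)), sum_erase_add _ _ hb]
  have hD : ∑ x ∈ D, update d a (d a - 1) x = ∑ x ∈ D, d x := sum_update_of_notMem haD _ _
  have hcN := card_erase_add_one hb
  have hZ : #{x ∈ N | 2 ≤ d x} ≤ #{x ∈ N.erase b | 2 ≤ update d a (d a - 1) x} := by
    refine card_le_card fun x hx => ?_
    simp only [mem_filter, mem_erase] at hx ⊢
    have hxa : x ≠ a := by rintro rfl; exact haN hx.1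
    refine ⟨⟨by rintro rfl; omega, hx.1⟩, by rw [update_of_ne hxa]; exact hx.2⟩
  refine ⟨disjoint_of_subset_right (erase_subset _ _) hAN, hAD,
    disjoint_of_subset_left (erase_subset _ _) hND,
    one_le_update_pred hpos (by intro x; simp; tauto) hda, ?_, ?_, ?_, ?_, ?_⟩ <;> omega

theorem erase_pair_dominated (hf : Feasible A N D d) {a b : α} (hb : b ∈ N) (hdb : d b = 1)
    (ha : a ∈ A) (hA1 : ∀ x ∈ A, d x = 1) : Feasible (A.erase a) (N.erase b) D d := by
  obtain ⟨hAN, hAD, hND, hpos, hcard, hle, hsur, hfor, hev⟩ := hf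
  have hsA : ∑ x ∈ A, d x = #A * 1 := sum_const_nat hA1
  have hda := hA1 a ha
  have hA := sum_erase_add A d ha
  have hN := sum_erase_add N d hb
  have hcA := card_erase_add_one ha
  have hcN := card_erase_add_one hb
  have hN0 : #(N.erase b) = 0 → ∑ x ∈ N.erase b, d x = 0 := fun h => by
    rw [card_eq_zero.1 h, sum_empty]
  have hD0 : #D = 0 → ∑ x ∈ D, d x = 0 := fun h => by rw [card_eq_zero.1 h, sum_empty]
  have hZ : #{x ∈ N | 2 ≤ d x} ≤ #{x ∈ N.erase b | 2 ≤ d x} := by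
    refine card_le_card fun x hx => ?_
    simp only [mem_filter, mem_erase] at hx ⊢
    exact ⟨⟨by rintro rfl; omega, hx.1⟩, hx.2⟩
  have hZ' := card_filter_le (N.erase b) fun x => 2 ≤ d x
  refine ⟨disjoint_of_subset_left (erase_subset _ _)
      (disjoint_of_subset_right (erase_subset _ _) hAN),
    disjoint_of_subset_left (erase_subset _ _) hAD,
    disjoint_of_subset_left (erase_subset _ _) hND,
    fun x hx => hpos x (by simp at hx ⊢; tauto), ?_, ?_, ?_, ?_, ?_⟩ <;> omega

theorem erase_attach_exempt (hf : Feasible A N D d)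
    (hne : ∑ x ∈ N, d x + ∑ x ∈ D, d x ≠ ∑ x ∈ A, d x) {b w : α} (hb : b ∈ D) (hdb : d b = 1)
    (hw : w ∈ N ∧ 3 ≤ d w ∨ w ∈ D ∧ 2 ≤ d w) :
    Feasible A N (D.erase b) (update d w (d w - 1)) := by
  obtain ⟨hAN, hAD, hND, hpos, hcard, hle, hsur, hfor, hev⟩ := hf
  have hdw : 2 ≤ d w := by omega
  have hwb : w ≠ b := by rintro rfl; omega
  have hwA : w ∉ A := fun h => by
    rcases hw with ⟨hw, -⟩ | ⟨hw, -⟩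
    · exact disjoint_left.1 hAN h hw
    · exact disjoint_left.1 hAD h hw
  have hA : ∑ x ∈ A, update d w (d w - 1) x = ∑ x ∈ A, d x := sum_update_of_notMem hwA _ _
  have hcD := card_erase_add_one hb
  have key : ∑ x ∈ N, update d w (d w - 1) x + ∑ x ∈ D.erase b, update d w (d w - 1) x + 2 =
      ∑ x ∈ N, d x + ∑ x ∈ D, d x ∧
      #{x ∈ N | 2 ≤ d x} ≤ #{x ∈ N | 2 ≤ update d w (d w - 1) x} := by
    have hDb := sum_erase_add D d hb
    rcases hw with ⟨hwN, hdw⟩ | ⟨hwD, hdw⟩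
    · have hwD : w ∉ D.erase b := fun h => disjoint_left.1 hND hwN (mem_of_mem_erase h)
      have := sum_update_pred_add_one hwN (d := d) (by omega)
      rw [sum_update_of_notMem hwD]
      refine ⟨by omega, card_le_card fun x hx => ?_⟩
      simp only [mem_filter] at hx ⊢
      rcases eq_or_ne x w with rfl | hxw
      · exact ⟨hx.1, by simp; omega⟩
      · rw [update_of_ne hxw]; exact hx
    · have hwN : w ∉ N := fun h => disjoint_left.1 hND h hwD
      have := sum_update_pred_add_one (mem_erase.2 ⟨hwb, hwD⟩) (d := d) (by omega)
      rw [sum_update_of_notMem hwN]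
      refine ⟨by omega, card_le_card fun x hx => ?_⟩
      simp only [mem_filter] at hx ⊢
      rw [update_of_ne (by rintro rfl; exact hwN hx.1)]; exact hx
  refine ⟨hAN, disjoint_of_subset_right (erase_subset _ _) hAD,
    disjoint_of_subset_right (erase_subset _ _) hND,
    one_le_update_pred hpos (by intro x; simp; tauto) hdw, ?_, ?_, ?_, ?_, ?_⟩ <;> omega

theorem erase_attach_exempt_of_deg_le_two (hf : Feasible A N D d)
    (hne : ∑ x ∈ N, d x + ∑ x ∈ D, d x ≠ ∑ x ∈ A, d x) {b w : α} (hb : b ∈ D) (hw : w ∈ N)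
    (hN2 : ∀ x ∈ N, d x = 2) (hD1 : ∀ x ∈ D, d x = 1) :
    Feasible A N (D.erase b) (update d w (d w - 1)) := by
  obtain ⟨hAN, hAD, hND, hpos, hcard, hle, hsur, hfor, hev⟩ := hf
  have hwA : w ∉ A := fun h => disjoint_left.1 hAN h hw
  have hwD : w ∉ D := disjoint_left.1 hND hw
  have hsN : ∑ x ∈ N, d x = #N * 2 := sum_const_nat hN2
  have hsD : ∑ x ∈ D, d x = #D * 1 := sum_const_nat hD1
  have hA : ∑ x ∈ A, update d w (d w - 1) x = ∑ x ∈ A, d x := sum_update_of_notMem hwA _ _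
  have hN := sum_update_pred_add_one hw (d := d) (by rw [hN2 w hw]; omega)
  have hD : ∑ x ∈ D.erase b, update d w (d w - 1) x + 1 = ∑ x ∈ D, d x := by
    rw [sum_update_of_notMem (fun h => hwD (mem_of_mem_erase h)), ← hD1 b hb,
      sum_erase_add _ _ hb]
  have hcD := card_erase_add_one hb
  have hcN := card_erase_add_one hw
  have hZ : #(N.erase w) ≤ #{x ∈ N | 2 ≤ update d w (d w - 1) x} := by
    refine card_le_card fun x hx => ?_
    obtain ⟨hxw, hx⟩ := mem_erase.1 hx
    simp only [mem_filter, update_of_ne hxw, hN2 x hx]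
    exact ⟨hx, le_rfl⟩
  refine ⟨hAN, disjoint_of_subset_right (erase_subset _ _) hAD,
    disjoint_of_subset_right (erase_subset _ _) hND,
    one_le_update_pred hpos (by intro x; simp; tauto) (hN2 w hw).ge, ?_, ?_, ?_, ?_, ?_⟩ <;> omega

theorem erase_pair_exempt (hf : Feasible A ∅ D d) (hne : ∑ x ∈ D, d x ≠ ∑ x ∈ A, d x)
    {b c : α} (hb : b ∈ D) (hc : c ∈ D) (hbc : b ≠ c) (hD1 : ∀ x ∈ D, d x = 1) :
    Feasible A ∅ ((D.erase b).erase c) d := by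
  obtain ⟨-, hAD, -, hpos, -, hle, hsur, hfor, hev⟩ := hf
  simp only [sum_empty, card_empty, filter_empty, zero_add, add_zero] at hle hsur hfor hev
  have hsD : ∑ x ∈ D, d x = #D * 1 := sum_const_nat hD1
  have hc' : c ∈ D.erase b := mem_erase.2 ⟨hbc.symm, hc⟩
  have hD : ∑ x ∈ (D.erase b).erase c, d x + 2 = ∑ x ∈ D, d x := by
    rw [← sum_erase_add _ _ hb, ← sum_erase_add _ _ hc', hD1 b hb, hD1 c hc]
  have hcD : #((D.erase b).erase c) + 2 = #D := by
    rw [← card_erase_add_one hb, ← card_erase_add_one hc']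
  have hA0 : #A = 0 → ∑ x ∈ A, d x = 0 := fun h => by rw [card_eq_zero.1 h, sum_empty]
  refine ⟨disjoint_empty_right _,
    disjoint_of_subset_right ((erase_subset _ _).trans (erase_subset _ _)) hAD,
    disjoint_empty_left _,
    fun x hx => hpos x (by simp at hx ⊢; tauto), ?_, ?_, ?_, ?_, ?_⟩ <;>
    simp only [sum_empty, card_empty, filter_empty] <;> omega

theorem erase_attach_new (hf : Feasible A N D d) {a w : α} (ha : a ∈ A) (hda : d a = 1)
    (hw : w ∈ N) (hdw : 2 ≤ d w) :
    Feasible (A.erase a) (N.erase w) (insert w D) (update d w (d w - 1)) := by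
  obtain ⟨hAN, hAD, hND, hpos, hcard, hle, hsur, hfor, hev⟩ := hf
  have hwA : w ∉ A := fun h => disjoint_left.1 hAN h hw
  have hwD : w ∉ D := disjoint_left.1 hND hw
  have hA : ∑ x ∈ A.erase a, update d w (d w - 1) x + 1 = ∑ x ∈ A, d x := by
    rw [sum_update_of_notMem (fun h => hwA (mem_of_mem_erase h)), ← hda, sum_erase_add _ _ ha]
  have hN : ∑ x ∈ N.erase w, update d w (d w - 1) x + d w = ∑ x ∈ N, d x := by
    rw [sum_update_of_notMem (notMem_erase w N), sum_erase_add _ _ hw]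
  have hD : ∑ x ∈ insert w D, update d w (d w - 1) x = d w - 1 + ∑ x ∈ D, d x := by
    rw [sum_insert hwD, update_self, sum_update_of_notMem hwD]
  have hcA := card_erase_add_one ha
  have hcN := card_erase_add_one hw
  have hcD := card_insert_of_notMem hwD
  have hZ : #{x ∈ N | 2 ≤ d x} ≤ #{x ∈ N.erase w | 2 ≤ update d w (d w - 1) x} + 1 := by
    have hwZ : w ∈ ({x ∈ N | 2 ≤ d x} : Finset α) := mem_filter.2 ⟨hw, hdw⟩
    rw [← card_erase_add_one hwZ, add_le_add_iff_right]
    refine card_le_card fun x hx => ?_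
    simp only [mem_filter, mem_erase] at hx ⊢
    exact ⟨⟨hx.1, hx.2.1⟩, by rw [update_of_ne hx.1]; exact hx.2.2⟩
  refine ⟨disjoint_of_subset_left (erase_subset _ _)
      (disjoint_of_subset_right (erase_subset _ _) hAN),
    ?_, ?_, one_le_update_pred hpos (by intro x; simp; grind) hdw, ?_, ?_, ?_, ?_, ?_⟩
  · exact disjoint_insert_right.2 ⟨fun h => hwA (mem_of_mem_erase h),
      disjoint_of_subset_left (erase_subset _ _) hAD⟩
  · exact disjoint_insert_right.2
      ⟨notMem_erase w N, disjoint_of_subset_left (erase_subset _ _) hND⟩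
  all_goals omega

theorem erase_attach_new_of_exempt (hf : Feasible A ∅ D d) {a w : α} (ha : a ∈ A)
    (hda : d a = 1) (hw : w ∈ D) (hdw : 2 ≤ d w) :
    Feasible (A.erase a) ∅ D (update d w (d w - 1)) := by
  obtain ⟨-, hAD, -, hpos, hcard, hle, hsur, hfor, hev⟩ := hf
  simp only [sum_empty, card_empty, filter_empty, zero_add, add_zero] at hcard hle hsur hfor hev
  have hwA : w ∉ A := fun h => disjoint_left.1 hAD h hw
  have hA : ∑ x ∈ A.erase a, update d w (d w - 1) x + 1 = ∑ x ∈ A, d x := by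
    rw [sum_update_of_notMem (fun h => hwA (mem_of_mem_erase h)), ← hda, sum_erase_add _ _ ha]
  have hD := sum_update_pred_add_one hw (d := d) (by omega)
  have hcA := card_erase_add_one ha
  refine ⟨disjoint_empty_right _, disjoint_of_subset_left (erase_subset _ _) hAD,
    disjoint_empty_left _, one_le_update_pred hpos (by intro x; simp; tauto) hdw,
    ?_, ?_, ?_, ?_, ?_⟩ <;> simp only [sum_empty, card_empty, filter_empty] <;> omega

theorem union_exempt (hf : Feasible A N D d)
    (heq : ∑ x ∈ N, d x + ∑ x ∈ D, d x = ∑ x ∈ A, d x) :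
    Feasible A (N ∪ D) ∅ d := by
  obtain ⟨hAN, hAD, hND, hpos, hcard, hle, -, hfor, hev⟩ := hf
  have hcN := card_add_card_filter_le_sum (S := N) fun x hx => hpos x (by simp [hx])
  have hcD := card_add_card_filter_le_sum (S := D) fun x hx => hpos x (by simp [hx])
  have hs := sum_union hND (f := d)
  have hc := card_union_of_disjoint hND
  have h0 : ∑ x ∈ (∅ : Finset α), d x = 0 := sum_empty
  have hc0 : #(∅ : Finset α) = 0 := card_empty
  refine ⟨disjoint_union_right.2 ⟨hAN, hAD⟩, disjoint_empty_right _, disjoint_empty_right _,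
    fun x hx => hpos x (by simpa using hx), ?_, ?_, ?_, ?_, ?_⟩ <;> omega

end Feasible

def Realizable (A N D : Finset α) (d : α → ℕ) : Prop :=
  ∃ G : SimpleGraph α, IsIndepDomForest G (A ∪ N ∪ D) A N d

namespace Realizable

variable {A N D : Finset α} {d : α → ℕ} {a b c w : α}

theorem of_union_exempt (h : Realizable A (N ∪ D) ∅ d) : Realizable A N D d := by
  obtain ⟨G, hG⟩ := h
  exact ⟨G, by simpa [union_assoc] using hG.mono subset_union_left⟩

variable [Fintype α]

theorem attach_dominated (h : Realizable A (N.erase b) D (update d a (d a - 1))) (hb : b ∈ N)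
    (hbA : b ∉ A) (hbD : b ∉ D) (ha : a ∈ A) (hdb : d b = 1) (hda : 1 ≤ d a) :
    Realizable A N D d := by
  obtain ⟨G, hG⟩ := h
  have hab : b ≠ a := by rintro rfl; exact hbA ha
  have := (hG.sup_edge (by simp [hbA, hbD]) (by simp [ha]) hdb hda (Or.inl hbA)).insert_dom ha
    (sup_edge_adj hab)
  rw [insert_erase hb, show insert b (A ∪ N.erase b ∪ D) = A ∪ N ∪ D by
    ext; simp; grind] at this
  exact ⟨_, this⟩

theorem pair_dominated (h : Realizable (A.erase a) (N.erase b) D d) (ha : a ∈ A) (hb : b ∈ N)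
    (haN : a ∉ N) (haD : a ∉ D) (hbA : b ∉ A) (hbD : b ∉ D) (hda : d a = 1) (hdb : d b = 1) :
    Realizable A N D d := by
  obtain ⟨G, hG⟩ := h
  have hab : b ≠ a := by rintro rfl; exact hbA ha
  have hG' := hG.insert_indep (x := a) (by simp [haN, haD])
  rw [insert_erase ha] at hG'
  have := (hG'.sup_edge_of_notMem (by simp [hbA, hbD]) (by simp [haN, haD]) hab hdb hda
    (Or.inl hbA)).insert_dom ha (sup_edge_adj hab)
  rw [insert_erase hb, show insert b (insert a (A.erase a ∪ N.erase b ∪ D)) = A ∪ N ∪ D by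
    ext; simp; grind] at this
  exact ⟨_, this⟩

theorem attach_exempt (h : Realizable A N (D.erase b) (update d w (d w - 1))) (hb : b ∈ D)
    (hbA : b ∉ A) (hbN : b ∉ N) (hw : w ∈ A ∪ N ∪ D) (hwb : w ≠ b) (hdb : d b = 1)
    (hdw : 1 ≤ d w) : Realizable A N D d := by
  obtain ⟨G, hG⟩ := h
  have := hG.sup_edge (v := b) (by simp [hbA, hbN]) (by simp at hw ⊢; tauto) hdb hdw (Or.inl hbA)
  rw [show insert b (A ∪ N ∪ D.erase b) = A ∪ N ∪ D by ext; simp; grind] at this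
  exact ⟨_, this⟩

theorem pair_exempt (h : Realizable A N ((D.erase b).erase c) d) (hb : b ∈ D) (hc : c ∈ D)
    (hbc : b ≠ c) (hbA : b ∉ A) (hbN : b ∉ N) (hcA : c ∉ A) (hcN : c ∉ N) (hdb : d b = 1)
    (hdc : d c = 1) : Realizable A N D d := by
  obtain ⟨G, hG⟩ := h
  have := hG.sup_edge_of_notMem (v := b) (w := c) (by simp [hbA, hbN]) (by simp [hcA, hcN]) hbc
    hdb hdc (Or.inl hbA)
  rw [show insert b (insert c (A ∪ N ∪ (D.erase b).erase c)) = A ∪ N ∪ D by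
    ext; simp; grind] at this
  exact ⟨_, this⟩

theorem attach_new (h : Realizable (A.erase a) (N.erase w) (insert w D) (update d w (d w - 1)))
    (ha : a ∈ A) (haN : a ∉ N) (haD : a ∉ D) (hw : w ∈ N ∪ D) (hwA : w ∉ A) (hda : d a = 1)
    (hdw : 1 ≤ d w) : Realizable A N D d := by
  obtain ⟨G, hG⟩ := h
  have haw : a ≠ w := by rintro rfl; exact hwA ha
  have hG' := hG.insert_indep (x := a) (by simp [haN, haD, haw])
  rw [insert_erase ha] at hG'
  have := ((hG'.sup_edge (v := a) (by simp [haN, haD, haw]) (by simp) hda hdw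
    (Or.inr hwA)).insert_dom ha (sup_edge_adj haw).symm).mono (insert_erase_subset w N)
  rw [show insert a (A.erase a ∪ N.erase w ∪ insert w D) = A ∪ N ∪ D by
    ext; simp; grind] at this
  exact ⟨_, this⟩

end Realizable

variable (α) in
def RealizableBelow (m : ℕ) : Prop :=
  ∀ (A N D : Finset α) (d : α → ℕ), #A + #N + #D < m → Feasible A N D d → Realizable A N D d

namespace Feasible

variable [Fintype α] {A N D : Finset α} {d : α → ℕ}

theorem realizable_of_leaf_dominated (ih : RealizableBelow α (#A + #N + #D))
    (hf : Feasible A N D d) {b : α} (hb : b ∈ N) (hdb : d b = 1) : Realizable A N D d := by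
  have hbA : b ∉ A := disjoint_right.1 hf.disjoint_AN hb
  have hbD : b ∉ D := disjoint_left.1 hf.disjoint_ND hb
  have hcN := card_erase_add_one hb
  by_cases hA2 : ∃ a ∈ A, 2 ≤ d a
  · obtain ⟨a, ha, hda⟩ := hA2
    exact (ih _ _ _ _ (by omega) (hf.erase_attach_dominated hb hdb ha hda)).attach_dominated hb hbA
      hbD ha hdb (by omega)
  push Not at hA2
  have hA1 : ∀ x ∈ A, d x = 1 := fun x hx => by
    have := hf.one_le x (by simp [hx]); have := hA2 x hx; omega
  obtain ⟨a, ha⟩ : A.Nonempty := by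
    rw [nonempty_iff_ne_empty]; rintro rfl; have := hf.card_le; rw [sum_empty] at this; omega
  have hcA := card_erase_add_one ha
  exact (ih _ _ _ _ (by omega) (hf.erase_pair_dominated hb hdb ha hA1)).pair_dominated ha hb
    (disjoint_left.1 hf.disjoint_AN ha) (disjoint_left.1 hf.disjoint_AD ha) hbA hbD (hA1 a ha) hdb

theorem realizable_of_leaf_exempt (ih : RealizableBelow α (#A + #N + #D))
    (hf : Feasible A N D d) (hne : ∑ x ∈ N, d x + ∑ x ∈ D, d x ≠ ∑ x ∈ A, d x)
    (hN1 : ∀ x ∈ N, d x ≠ 1) {b : α} (hb : b ∈ D) (hdb : d b = 1) : Realizable A N D d := by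
  have hbA : b ∉ A := disjoint_right.1 hf.disjoint_AD hb
  have hbN : b ∉ N := disjoint_right.1 hf.disjoint_ND hb
  have hcD := card_erase_add_one hb
  -- Hanging `b` on `w` keeps `w` counted in `#D + #{x ∈ N | 2 ≤ d x}` unless `w ∈ N` has degree 2.
  by_cases hw : ∃ w, w ∈ N ∧ 3 ≤ d w ∨ w ∈ D ∧ 2 ≤ d w
  · obtain ⟨w, hw⟩ := hw
    have hwV : w ∈ A ∪ N ∪ D := by rcases hw with ⟨hw, -⟩ | ⟨hw, -⟩ <;> simp [hw]
    have hwb : w ≠ b := by rintro rfl; omega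
    exact (ih _ _ _ _ (by omega) (hf.erase_attach_exempt hne hb hdb hw)).attach_exempt hb hbA hbN
      hwV hwb hdb (by omega)
  push Not at hw
  have hN2 : ∀ x ∈ N, d x = 2 := fun x hx => by
    have := hf.one_le x (by simp [hx]); have := hN1 x hx; have := (hw x).1 hx; omega
  have hD1 : ∀ x ∈ D, d x = 1 := fun x hx => by
    have := hf.one_le x (by simp [hx]); have := (hw x).2 hx; omega
  rcases N.eq_empty_or_nonempty with rfl | ⟨w, hwN⟩
  · have hsD : ∑ x ∈ D, d x = #D * 1 := sum_const_nat hD1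
    have hle := hf.sum_le; have heven := hf.even
    simp only [sum_empty, zero_add, add_zero] at hne hle heven
    obtain ⟨c, hc, hcb⟩ := exists_mem_ne (show 1 < #D by omega) b
    have hcA : c ∉ A := disjoint_right.1 hf.disjoint_AD hc
    have := card_erase_add_one (mem_erase.2 ⟨hcb, hc⟩)
    exact (ih _ _ _ _ (by omega) (hf.erase_pair_exempt hne hb hc hcb.symm hD1)).pair_exempt hb hc
      hcb.symm hbA (notMem_empty b) hcA (notMem_empty c) hdb (hD1 c hc)
  · have hwb : w ≠ b := by rintro rfl; exact hbN hwN
    exact (ih _ _ _ _ (by omega)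
      (hf.erase_attach_exempt_of_deg_le_two hne hb hwN hN2 hD1)).attach_exempt hb hbA hbN
      (by simp [hwN]) hwb hdb (by rw [hN2 w hwN]; omega)

theorem realizable_of_no_leaf_outside (ih : RealizableBelow α (#A + #N + #D))
    (hf : Feasible A N D d) (hpos : 0 < #A + #N + #D) (hB : ∀ x ∈ N ∪ D, 2 ≤ d x) :
    Realizable A N D d := by
  obtain ⟨a, ha, hda⟩ : ∃ a ∈ A, d a = 1 := by
    by_contra! hA
    have hA2 : ∀ x ∈ A, 2 ≤ d x := fun x hx => by
      have := hf.one_le x (by simp [hx]); have := hA x hx; omega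
    have h2A : #A * 2 ≤ ∑ x ∈ A, d x := by simpa using card_nsmul_le_sum A d 2 hA2
    have h2N : #N * 2 ≤ ∑ x ∈ N, d x := by
      simpa using card_nsmul_le_sum N d 2 fun x hx => hB x (by simp [hx])
    have h2D : #D * 2 ≤ ∑ x ∈ D, d x := by
      simpa using card_nsmul_le_sum D d 2 fun x hx => hB x (by simp [hx])
    have := hf.forest
    omega
  have haN : a ∉ N := disjoint_left.1 hf.disjoint_AN ha
  have haD : a ∉ D := disjoint_left.1 hf.disjoint_AD ha
  have hcA := card_erase_add_one ha
  rcases N.eq_empty_or_nonempty with rfl | ⟨w, hw⟩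
  · obtain ⟨w, hw⟩ : D.Nonempty := by
      rw [nonempty_iff_ne_empty]; rintro rfl
      have := hf.sum_le; have := single_le_sum (fun _ _ => Nat.zero_le _) ha (f := d)
      simp only [sum_empty] at *; omega
    have hdw := hB w (by simp [hw])
    have hf' := hf.erase_attach_new_of_exempt ha hda hw hdw
    refine Realizable.attach_new ?_ ha haN haD (by simp [hw]) (disjoint_right.1 hf.disjoint_AD hw)
      hda (by omega)
    rw [erase_empty, insert_eq_of_mem hw]
    exact ih _ _ _ _ (by simp only [card_empty] at *; omega) hf'
  · have hdw := hB w (by simp [hw])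
    have hwD : w ∉ D := disjoint_left.1 hf.disjoint_ND hw
    have := card_erase_add_one hw
    have := card_insert_of_notMem hwD
    exact (ih _ _ _ _ (by omega) (hf.erase_attach_new ha hda hw hdw)).attach_new ha haN haD
      (by simp [hw]) (disjoint_right.1 hf.disjoint_AN hw) hda (by omega)

theorem realizable_of_normalized (ih : RealizableBelow α (#A + #N + #D)) (hf : Feasible A N D d)
    (hD : ∑ x ∈ N, d x + ∑ x ∈ D, d x = ∑ x ∈ A, d x → D = ∅) : Realizable A N D d := by
  rcases Nat.eq_zero_or_pos (#A + #N + #D) with h0 | hpos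
  · obtain ⟨⟨rfl, rfl⟩, rfl⟩ : (A = ∅ ∧ N = ∅) ∧ D = ∅ := by simpa using h0
    exact ⟨⊥, by simpa using IsIndepDomForest.bot ∅ d⟩
  by_cases hN1 : ∃ b ∈ N, d b = 1
  · obtain ⟨b, hb, hdb⟩ := hN1
    exact hf.realizable_of_leaf_dominated ih hb hdb
  push Not at hN1
  by_cases hD1 : ∃ b ∈ D, d b = 1
  · obtain ⟨b, hb, hdb⟩ := hD1
    exact hf.realizable_of_leaf_exempt ih (fun h => by simp [hD h] at hb) hN1 hb hdb
  push Not at hD1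
  refine hf.realizable_of_no_leaf_outside ih hpos fun x hx => ?_
  have := hf.one_le x (by simp at hx ⊢; tauto)
  rcases mem_union.1 hx with hx | hx
  · have := hN1 x hx; omega
  · have := hD1 x hx; omega

theorem realizable (hf : Feasible A N D d) : Realizable A N D d := by
  induction hm : #A + #N + #D using Nat.strong_induction_on generalizing A N D d with
  | _ m ih =>
  have ih' : RealizableBelow α m := fun A' N' D' d' h hf' => ih _ h hf' rfl
  by_cases heq : ∑ x ∈ N, d x + ∑ x ∈ D, d x = ∑ x ∈ A, d x
  -- With balanced sums no edge avoids `A`, so `D` may as well be dominated too.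
  · have hcard : #A + #(N ∪ D) + #(∅ : Finset α) = m := by
      rw [card_union_of_disjoint hf.disjoint_ND, card_empty, ← hm]; ring
    exact (realizable_of_normalized (hcard ▸ ih') (hf.union_exempt heq)
      fun _ => rfl).of_union_exempt
  · exact realizable_of_normalized (hm ▸ ih') hf fun h => absurd h heq

end Feasible

theorem feasible_prefix_suffix {n : ℕ} (d : Fin n → ℕ) (hpos : ∀ i, 1 ≤ d i)
    (heven : Even (∑ i, d i)) (hsum : ∑ i, d i ≤ 2 * n - 2) (k : ℕ) (h1 : n - k ≤ psum d k)
    (h2 : psum d k ≤ ssum d k) (h3 : ssum d k - psum d k ≤ 2 * (nGe2 d - k) - 2) :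
    Feasible ({i | (i : ℕ) < k} : Finset (Fin n)) {i | ¬ (i : ℕ) < k} ∅ d := by
  set A : Finset (Fin n) := {i | (i : ℕ) < k}
  set N : Finset (Fin n) := {i | ¬ (i : ℕ) < k}
  have hA : psum d k = ∑ i ∈ A, d i := by rw [psum, sum_filter]
  have hN : ssum d k = ∑ i ∈ N, d i := by simp only [ssum, N, sum_filter, not_lt]
  have htot : ∑ i ∈ A, d i + ∑ i ∈ N, d i = ∑ i, d i := sum_filter_add_sum_filter_not _ _ _
  have hcard : #A + #N = n := by
    rw [card_filter_add_card_filter_not, card_univ, Fintype.card_fin]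
  have hcA : #A = min n k := Fin.card_filter_val_lt
  have hZ : nGe2 d ≤ #A + #{i ∈ N | 2 ≤ d i} := by
    refine (card_le_card fun i hi => ?_).trans (card_union_le _ _)
    by_cases hik : (i : ℕ) < k <;> simp_all [A, N]
  have h0 : ∑ i ∈ (∅ : Finset (Fin n)), d i = 0 := sum_empty
  have hc0 : #(∅ : Finset (Fin n)) = 0 := card_empty
  obtain ⟨m, hm⟩ := heven
  refine ⟨disjoint_filter_filter_not _ _ _, disjoint_empty_right _, disjoint_empty_right _,
    fun i _ => hpos i, ?_, ?_, ?_, ?_, ?_⟩ <;> omega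

theorem stmt11_general {n : ℕ} (d : Fin n → ℕ) (hpos : ∀ i, 1 ≤ d i)
    (heven : Even (∑ i, d i)) (hsum : ∑ i, d i ≤ 2 * n - 2)
    (k : ℕ)
    (h1 : n - k ≤ psum d k) (h2 : psum d k ≤ ssum d k)
    (h3 : ssum d k - psum d k ≤ 2 * (nGe2 d - k) - 2) :
    ∃ F : SimpleGraph (Fin n), IsForestReal d F ∧
      IndepSet F {i | (i : ℕ) < k} ∧ DomSet F {i | (i : ℕ) < k} := by
  obtain ⟨F, hF⟩ := (feasible_prefix_suffix d hpos heven hsum k h1 h2 h3).realizable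
  refine ⟨F, ⟨hF.isAcyclic, fun i => hF.deg_eq i (by simp; omega)⟩,
    fun u hu v hv => hF.indep u (by simpa using hu) v (by simpa using hv), fun v hv => ?_⟩
  obtain ⟨a, ha, hav⟩ := hF.dom v (by simpa using hv)
  exact ⟨a, by simpa using ha, hav⟩

theorem stmt11 {n : ℕ} (d : Fin n → ℕ) (hd : Antitone d) (hpos : ∀ i, 1 ≤ d i)
    (heven : Even (∑ i, d i)) (hsum : ∑ i, d i ≤ 2 * n - 2)
    (k : ℕ) (hk1 : 1 ≤ k) (hkn : k ≤ n)
    (h1 : n - k ≤ psum d k) (h2 : psum d k ≤ ssum d k)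
    (h3 : ssum d k - psum d k ≤ 2 * (nGe2 d - k) - 2) :
    ∃ F : SimpleGraph (Fin n), IsForestReal d F ∧
      IndepSet F {i | (i : ℕ) < k} ∧ DomSet F {i | (i : ℕ) < k} :=
  stmt11_general d hpos heven hsum k h1 h2 h3
end
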